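/- arXiv:2008.03524 — 4 statements merged into one kernel-verified Lean document; each statement's English description precedes it below -/
import Mathlib

section
/- For every nonnegative integer n and complex t with |t| < 1, t ∉ {0}, the following reduction formula holds: ₂F₁(1/2 + n, 1 + n; 2 + n; t) = (2(-1)^n (n+1)! / ((1/2)_n · t^{n+1})) · [1 - √(1-t) · ∑_{k=0}^{n} ((-1/2)_k / k!) (t/(t-1))^k]. -/
/-!
Write `c_k` for the Taylor coefficients of `√(1 - t)`. Reindexing shows that
`(1/2)_n t^(n+1) ₂F₁(1/2 + n, 1 + n; 2 + n; t) = -2 (n + 1) S_n(t)`, where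
`S_n(t) = ∑_m c_(m+1) m(m-1)⋯(m-n+1) t^(m+1)` is `t^(n+1)` times the `n`-th derivative of
`(√(1 - t) - 1) / t`. Termwise differentiation gives `t S_n' = S_(n+1) + (n + 1) S_n`, and the
binomial series gives `S_0 = √(1 - t) - 1`. The function
`W_n(t) = √(1 - t) ∑_(k ≤ n) c_k (t/(t-1))^k` satisfies `t W_n' = (n + 1) (W_n - W_(n+1))`,
so `S_n = (-1)^(n+1) n! (1 - W_n)` follows by induction on `n`; this is the claimed formula.
-/

open scoped BigOperators

/-- Pochhammer symbol `(a)_k` on `ℂ`. -/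
noncomputable def pochC (a : ℂ) (k : ℕ) : ℂ := ∏ i ∈ Finset.range k, (a + i)

/-- Gauss hypergeometric series `₂F₁(a,b;c;z)`. -/
noncomputable def hyp2F1 (a b c z : ℂ) : ℂ :=
  ∑' k : ℕ, pochC a k * pochC b k / (pochC c k * (k.factorial : ℂ)) * z ^ k

open Filter Topology Finset Nat

section Pochhammer

lemma pochC_succ (a : ℂ) (k : ℕ) : pochC a (k + 1) = pochC a k * (a + k) :=
  prod_range_succ _ k

lemma pochC_add (a : ℂ) (m k : ℕ) : pochC a (m + k) = pochC a m * pochC (a + m) k := by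
  simp only [pochC, prod_range_add, Nat.cast_add, add_assoc]

lemma pochC_one (k : ℕ) : pochC 1 k = k ! := by
  simp only [pochC, ← prod_range_add_one_eq_factorial, Nat.cast_prod, Nat.cast_add, Nat.cast_one,
    add_comm (1 : ℂ)]

lemma pochC_ne_zero {a : ℂ} (ha : 0 < a.re) (k : ℕ) : pochC a k ≠ 0 :=
  prod_ne_zero_iff.mpr fun i _ h => by
    have := congrArg Complex.re h
    simp only [Complex.add_re, Complex.natCast_re, Complex.zero_re] at this
    linarith [i.cast_nonneg (α := ℝ)]

lemma norm_pochC_le_factorial {a : ℂ} (ha : ‖a‖ ≤ 1) (k : ℕ) : ‖pochC a k‖ ≤ k ! := by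
  rw [pochC, norm_prod, ← prod_range_add_one_eq_factorial, Nat.cast_prod]
  refine prod_le_prod (fun _ _ => norm_nonneg _) fun i _ => ?_
  calc ‖a + i‖ ≤ ‖a‖ + i := by simpa using norm_add_le a i
    _ ≤ ((i + 1 : ℕ) : ℝ) := by push_cast; linarith

lemma choose_mul_neg_one_pow (a : ℂ) (k : ℕ) :
    Ring.choose a k * (-1) ^ k = pochC (-a) k / k ! := by
  have hneg : pochC (-a) k = (-1) ^ k * ∏ i ∈ range k, (a - i) := by
    rw [show (-1 : ℂ) ^ k = (-1) ^ (range k).card by rw [card_range], ← prod_neg]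
    exact prod_congr rfl fun i _ => by ring
  rw [Ring.choose_eq_smul, ← Polynomial.aeval_eq_smeval, Polynomial.aeval_def,
    ← Polynomial.eval_map, descPochhammer_map, descPochhammer_eval_eq_prod_range, smul_eq_mul, hneg]
  ring

end Pochhammer

section PowerSeries

variable {𝕜 : Type*} [RCLike 𝕜] {e : ℕ → 𝕜} {C : ℝ} {p : ℕ}

lemma summable_succ_pow_mul_geometric {r : ℝ} (hr0 : 0 < r) (hr : r < 1) (k : ℕ) :
    Summable fun m : ℕ => ((m : ℝ) + 1) ^ k * r ^ m := by
  have h := (summable_nat_add_iff 1).mpr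
    (summable_pow_mul_geometric_of_norm_lt_one k (r := r) (by rwa [Real.norm_of_nonneg hr0.le]))
  refine (h.mul_left r⁻¹).congr fun m => ?_
  push_cast
  field_simp
  ring

lemma summable_mul_pow_succ (he : ∀ m, ‖e m‖ ≤ C * ((m : ℝ) + 1) ^ p) {t : 𝕜} (ht : ‖t‖ < 1) :
    Summable fun m => e m * t ^ (m + 1) := by
  obtain ⟨r, htr, hr1⟩ := exists_between ht
  have hr0 : 0 < r := (norm_nonneg t).trans_lt htr
  refine .of_norm_bounded ((summable_succ_pow_mul_geometric hr0 hr1 p).mul_left C) fun m => ?_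
  calc ‖e m * t ^ (m + 1)‖ = ‖e m‖ * (‖t‖ ^ m * ‖t‖) := by rw [norm_mul, norm_pow, pow_succ]
    _ ≤ ‖e m‖ * (r ^ m * 1) := by gcongr
    _ ≤ C * (((m : ℝ) + 1) ^ p * r ^ m) := by rw [mul_one, ← mul_assoc]; gcongr; exact he m

lemma hasDerivAt_tsum_mul_pow_succ (he : ∀ m, ‖e m‖ ≤ C * ((m : ℝ) + 1) ^ p) {t : 𝕜}
    (ht : ‖t‖ < 1) :
    HasDerivAt (fun z => ∑' m, e m * z ^ (m + 1)) (∑' m, (m + 1) * e m * t ^ m) t := by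
  obtain ⟨r, htr, hr1⟩ := exists_between ht
  have hr0 : 0 < r := (norm_nonneg t).trans_lt htr
  refine hasDerivAt_tsum_of_isPreconnected (g := fun m z => e m * z ^ (m + 1))
    (g' := fun m z => (m + 1) * e m * z ^ m)
    (summable_succ_pow_mul_geometric hr0 hr1 (p + 1) |>.mul_left C)
    Metric.isOpen_ball (convex_ball 0 r).isPreconnected (fun m y _ => ?_) (fun m y hy => ?_)
    (Metric.mem_ball_self hr0) (by simp) (mem_ball_zero_iff.mpr htr)
  · exact ((hasDerivAt_pow (m + 1) y).const_mul (e m)).congr_deriv (by push_cast; ring)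
  · rw [mem_ball_zero_iff] at hy
    calc ‖((m : 𝕜) + 1) * e m * y ^ m‖ = ((m : ℝ) + 1) * ‖e m‖ * ‖y‖ ^ m := by
          rw [norm_mul, norm_mul, norm_pow]; norm_cast
      _ ≤ ((m : ℝ) + 1) * ‖e m‖ * r ^ m := by gcongr
      _ ≤ ((m : ℝ) + 1) * (C * ((m : ℝ) + 1) ^ p) * r ^ m := by gcongr; exact he m
      _ = C * (((m : ℝ) + 1) ^ (p + 1) * r ^ m) := by ring

end PowerSeries

lemma succ_mul_descFactorial (m n : ℕ) :
    ((m : ℂ) + 1) * m.descFactorial n = m.descFactorial (n + 1) + (n + 1) * m.descFactorial n := by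
  rcases le_or_gt n m with hnm | hmn
  · rw [Nat.descFactorial_succ, Nat.cast_mul, Nat.cast_sub hnm]
    ring
  · simp [Nat.descFactorial_eq_zero_iff_lt.mpr hmn]

noncomputable def sqrtCoeff (k : ℕ) : ℂ := pochC (-1/2) k / k !

lemma sqrtCoeff_zero : sqrtCoeff 0 = 1 := by simp [sqrtCoeff, pochC]

lemma hasSum_sqrtCoeff {t : ℂ} (ht : ‖t‖ < 1) :
    HasSum (fun k => sqrtCoeff k * t ^ k) ((1 - t) ^ (1/2 : ℂ)) := by
  have h := Complex.one_add_cpow_hasFPowerSeriesOnBall_zero (a := 1/2).hasSum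
    (y := -t) (by rw [← ENNReal.ofReal_one, Metric.eball_ofReal]; simpa using ht)
  simp only [binomialSeries_apply, List.prod_ofFn, Fin.prod_const, smul_eq_mul, zero_sub,
    ← sub_eq_add_neg] at h
  suffices hk : ∀ k, sqrtCoeff k * t ^ k = Ring.choose (1/2) k * (-t) ^ k by
    simpa only [hk] using h
  intro k
  rw [sqrtCoeff, neg_div, ← choose_mul_neg_one_pow, neg_pow]
  ring

lemma succ_mul_sqrtCoeff_succ (k : ℕ) :
    (k + 1) * sqrtCoeff (k + 1) = (k - 1/2) * sqrtCoeff k := by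
  simp only [sqrtCoeff, pochC_succ, factorial_succ, Nat.cast_mul]
  field_simp
  push_cast
  ring

lemma norm_sqrtCoeff_le_one (k : ℕ) : ‖sqrtCoeff k‖ ≤ 1 := by
  rw [sqrtCoeff, norm_div, Complex.norm_natCast, div_le_one (by positivity)]
  exact norm_pochC_le_factorial (by norm_num) k

noncomputable def pfaffPartialSum (n : ℕ) (t : ℂ) : ℂ :=
  (1 - t) ^ (1/2 : ℂ) * ∑ k ∈ range (n + 1), sqrtCoeff k * (t / (t - 1)) ^ k

lemma pfaffPartialSum_succ (n : ℕ) (t : ℂ) :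
    pfaffPartialSum (n + 1) t = pfaffPartialSum n t +
      sqrtCoeff (n + 1) * ((1 - t) ^ (1/2 : ℂ) * (t / (t - 1)) ^ (n + 1)) := by
  rw [pfaffPartialSum, sum_range_succ, pfaffPartialSum]
  ring

lemma hasDerivAt_one_sub_cpow_half {t : ℂ} (ht : 1 - t ∈ Complex.slitPlane) :
    HasDerivAt (fun z => (1 - z) ^ (1/2 : ℂ)) (-(1 - t) ^ (1/2 : ℂ) / (2 * (1 - t))) t := by
  refine (((hasDerivAt_id' t).const_sub 1).cpow_const (c := 1/2) ht).congr_deriv ?_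
  rw [Complex.cpow_sub _ _ (Complex.slitPlane_ne_zero ht), Complex.cpow_one]
  field_simp

lemma hasDerivAt_div_sub_one {t : ℂ} (ht : t ≠ 1) :
    HasDerivAt (fun z => z / (z - 1)) (-1 / (t - 1) ^ 2) t := by
  have h := (hasDerivAt_id' t).div ((hasDerivAt_id' t).sub_const 1) (sub_ne_zero.mpr ht)
  exact h.congr_deriv (by ring)

lemma hasDerivAt_pfaffPartialSum (n : ℕ) {t : ℂ} (ht : 1 - t ∈ Complex.slitPlane) :
    HasDerivAt (pfaffPartialSum n)
      ((n + 1) * sqrtCoeff (n + 1) * (1 - t) ^ (1/2 : ℂ) * (t / (t - 1)) ^ n / (1 - t)) t := by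
  have ht1 : 1 - t ≠ 0 := Complex.slitPlane_ne_zero ht
  have ht1' : t - 1 ≠ 0 := by rwa [← neg_sub, neg_ne_zero]
  induction n with
  | zero =>
    have hc : sqrtCoeff 1 = -1/2 := by simp [sqrtCoeff, pochC]
    refine (hasDerivAt_one_sub_cpow_half ht).congr_of_eventuallyEq ?_ |>.congr_deriv ?_
    · exact Eventually.of_forall fun z => by simp [pfaffPartialSum, sqrtCoeff_zero]
    · rw [hc]
      field_simp
      ring
  | succ n ih =>
    have hterm := ((hasDerivAt_one_sub_cpow_half ht).fun_mul
      ((hasDerivAt_div_sub_one (sub_ne_zero.mp ht1')).fun_pow (n + 1))).const_mul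
      (sqrtCoeff (n + 1))
    rw [funext (pfaffPartialSum_succ n)]
    refine (ih.fun_add hterm).congr_deriv ?_
    have hc := succ_mul_sqrtCoeff_succ (n + 1)
    push_cast at hc ⊢
    rw [pow_succ]
    field_simp
    linear_combination (-2 * t * (1 - t) ^ (1/2 : ℂ) * (t - 1) * (t / (t - 1)) ^ n) * hc


noncomputable def sqrtDerivSeries (n : ℕ) (t : ℂ) : ℂ :=
  ∑' m, sqrtCoeff (m + 1) * m.descFactorial n * t ^ (m + 1)

lemma norm_sqrtCoeff_mul_descFactorial_le (n m : ℕ) :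
    ‖sqrtCoeff (m + 1) * m.descFactorial n‖ ≤ 1 * ((m : ℝ) + 1) ^ n := by
  rw [norm_mul, Complex.norm_natCast]
  gcongr
  · exact norm_sqrtCoeff_le_one _
  · exact_mod_cast (Nat.descFactorial_le_pow m n).trans (Nat.pow_le_pow_left m.le_succ n)

lemma sqrtDerivSeries_zero {t : ℂ} (ht : ‖t‖ < 1) :
    sqrtDerivSeries 0 t = (1 - t) ^ (1/2 : ℂ) - 1 := by
  have h := (hasSum_nat_add_iff' 1).mpr (hasSum_sqrtCoeff ht)
  simp only [sum_range_one, pow_zero, sqrtCoeff_zero, mul_one] at h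
  simpa [sqrtDerivSeries] using h.tsum_eq

lemma hasDerivAt_sqrtDerivSeries (n : ℕ) {t : ℂ} (ht : ‖t‖ < 1) (ht0 : t ≠ 0) :
    HasDerivAt (sqrtDerivSeries n)
      ((sqrtDerivSeries (n + 1) t + (n + 1) * sqrtDerivSeries n t) / t) t := by
  have hsum (k : ℕ) := summable_mul_pow_succ (norm_sqrtCoeff_mul_descFactorial_le k) ht
  refine (hasDerivAt_tsum_mul_pow_succ (norm_sqrtCoeff_mul_descFactorial_le n) ht).congr_deriv ?_
  rw [eq_div_iff ht0, sqrtDerivSeries, sqrtDerivSeries, ← tsum_mul_left,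
    ← (hsum _).tsum_add ((hsum _).mul_left _), ← tsum_mul_right]
  refine tsum_congr fun m => ?_
  linear_combination (sqrtCoeff (m + 1) * t ^ (m + 1)) * succ_mul_descFactorial m n

lemma sqrtDerivSeries_eq (n : ℕ) {t : ℂ} (ht : ‖t‖ < 1) (ht0 : t ≠ 0) :
    sqrtDerivSeries n t = (-1) ^ (n + 1) * n ! * (1 - pfaffPartialSum n t) := by
  induction n generalizing t with
  | zero =>
    rw [sqrtDerivSeries_zero ht]
    simp [pfaffPartialSum, sqrtCoeff_zero]
  | succ n ih =>
    have hslit : 1 - t ∈ Complex.slitPlane := by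
      simpa [← sub_eq_add_neg] using Complex.mem_slitPlane_of_norm_lt_one (z := -t) (by simpa)
    have hnhds : ∀ᶠ z in 𝓝 t,
        sqrtDerivSeries n z = (-1) ^ (n + 1) * n ! * (1 - pfaffPartialSum n z) := by
      filter_upwards [(isOpen_lt continuous_norm continuous_const).mem_nhds ht,
        isOpen_ne.mem_nhds ht0] with z hz hz0 using ih hz hz0
    have hderiv := (((hasDerivAt_pfaffPartialSum n hslit).const_sub 1).const_mul
      ((-1) ^ (n + 1) * (n ! : ℂ))).congr_of_eventuallyEq hnhds
    have h := (hasDerivAt_sqrtDerivSeries n ht ht0).unique hderiv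
    rw [ih ht ht0] at h
    rw [pfaffPartialSum_succ, factorial_succ]
    have ht1 : 1 - t ≠ 0 := Complex.slitPlane_ne_zero hslit
    have ht1' : t - 1 ≠ 0 := by rwa [← neg_sub, neg_ne_zero]
    have hq1 : t / (t - 1) * (1 - t) = -t := by
      rw [div_mul_eq_mul_div, div_eq_iff ht1']
      ring
    have hq : (t / (t - 1)) ^ (n + 1) * (1 - t) = -t * (t / (t - 1)) ^ n := by
      rw [pow_succ, mul_assoc, hq1]
      ring
    field_simp at h
    refine mul_right_cancel₀ ht1 ?_
    push_cast
    linear_combination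
      h - ((n + 1) * (-1) ^ (n + 1) * n ! * sqrtCoeff (n + 1) * (1 - t) ^ (1/2 : ℂ)) * hq

lemma pochC_half_mul_hyp2F1_coeff (n k : ℕ) :
    pochC (1/2) n * (pochC (1/2 + n) k * pochC (1 + n) k / (pochC (2 + n) k * k !)) =
      -2 * (n + 1) * (sqrtCoeff (n + k + 1) * (n + k).descFactorial n) := by
  have hhalf : pochC (-1/2) (n + k + 1) = -1/2 * (pochC (1/2) n * pochC (1/2 + n) k) := by
    rw [add_comm, pochC_add, pochC_add]
    norm_num [pochC]
  have hfact : ((n + k)! : ℂ) = n ! * pochC (1 + n) k := by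
    rw [← pochC_one, pochC_add, pochC_one]
  have hfact' : ((n + k + 1)! : ℂ) = (n + 1)! * pochC (2 + n) k := by
    rw [← pochC_one, add_right_comm, pochC_add, pochC_one]
    push_cast
    ring_nf
  have hk : (k ! : ℂ) ≠ 0 := Nat.cast_ne_zero.mpr k.factorial_ne_zero
  have hn : (n ! : ℂ) ≠ 0 := Nat.cast_ne_zero.mpr n.factorial_ne_zero
  have hdesc : ((n + k).descFactorial n : ℂ) = n ! * pochC (1 + n) k / k ! := by
    rw [eq_div_iff hk, ← hfact, mul_comm]
    have := Nat.factorial_mul_descFactorial (Nat.le_add_right n k)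
    rw [Nat.add_sub_cancel_left] at this
    exact_mod_cast this
  have h2 : pochC (2 + n) k ≠ 0 := pochC_ne_zero (by simp; positivity) k
  rw [sqrtCoeff, hhalf, hdesc, hfact', factorial_succ]
  push_cast
  field_simp

lemma pochC_half_mul_hyp2F1 (n : ℕ) (t : ℂ) :
    pochC (1/2) n * t ^ (n + 1) * hyp2F1 (1/2 + n) (1 + n) (2 + n) t =
      -2 * (n + 1) * sqrtDerivSeries n t := by
  have hsupp : Function.support (fun m => sqrtCoeff (m + 1) * m.descFactorial n * t ^ (m + 1)) ⊆
      Set.range (· + n) := fun m hm => by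
    have hnm : n ≤ m := by
      by_contra h
      simp [Nat.descFactorial_eq_zero_iff_lt.mpr (not_le.mp h)] at hm
    exact ⟨m - n, Nat.sub_add_cancel hnm⟩
  rw [hyp2F1, sqrtDerivSeries, ← (add_left_injective n).tsum_eq hsupp, ← tsum_mul_left,
    ← tsum_mul_left]
  refine tsum_congr fun k => ?_
  rw [add_comm k n]
  linear_combination t ^ (k + n + 1) * pochC_half_mul_hyp2F1_coeff n k

theorem reduction_first_diff (n : ℕ) (t : ℂ) (ht : ‖t‖ < 1) (ht0 : t ≠ 0) :
    hyp2F1 (1/2 + n) (1 + n) (2 + n) t =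
      2 * (-1) ^ n * ((n + 1).factorial : ℂ) / (pochC (1/2) n * t ^ (n + 1)) *
        (1 - (1 - t) ^ ((1 : ℂ)/2) *
          ∑ k ∈ Finset.range (n + 1), pochC (-1/2) k / (k.factorial : ℂ) * (t / (t - 1)) ^ k) := by
  have h := pochC_half_mul_hyp2F1 n t
  rw [sqrtDerivSeries_eq n ht ht0] at h
  change _ = _ * (1 - pfaffPartialSum n t)
  have hden : pochC (1/2) n * t ^ (n + 1) ≠ 0 :=
    mul_ne_zero (pochC_ne_zero (by norm_num) n) (pow_ne_zero _ ht0)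
  rw [div_mul_eq_mul_div, eq_div_iff hden, factorial_succ]
  push_cast
  linear_combination h
end

section
/- For every nonnegative integer n and real t with 0 < t < 1, the incomplete beta function satisfies B(1+n, 1/2 - n, t) = (2(-1)^n n! / (1/2)_n) · [1 - √(1-t) · ∑_{k=0}^{n} ((-1/2)_k / k!) (t/(t-1))^k]. -/
/-!
With `u = x / (x - 1)`, the integrand `x ^ n * (1 - x) ^ (-a - n - 1)` has the elementary
antiderivative `(1 - x) ^ (-a) * S(u)` up to the factor `(a + n) (a)_n / n! * (-1) ^ n`, where
`S` is the degree-`n` partial sum of the binomial series of `(1 - u) ^ (-a)`. Indeed `S`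
satisfies the equation `(1 - u) S' = a S` of `(1 - u) ^ (-a)` up to its top-degree term, and
that term is exactly what survives on differentiation. The theorem is the case `a = -1/2`.
-/

open scoped BigOperators

/-- Pochhammer symbol `(a)_k` on `ℝ`. -/
noncomputable def pochR (a : ℝ) (k : ℕ) : ℝ := ∏ i ∈ Finset.range k, (a + i)

/-- Incomplete beta function `B(ν, μ, t) = ∫_0^t x^{ν-1}(1-x)^{μ-1} dx`. -/
noncomputable def incBeta (ν μ t : ℝ) : ℝ :=
  ∫ x in (0 : ℝ)..t, x ^ (ν - 1) * (1 - x) ^ (μ - 1)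

open Finset

lemma pochR_succ (a : ℝ) (k : ℕ) : pochR a (k + 1) = pochR a k * (a + k) :=
  prod_range_succ _ _

lemma pochR_succ' (a : ℝ) (k : ℕ) : pochR a (k + 1) = a * pochR (a + 1) k := by
  rw [pochR, prod_range_succ', pochR, mul_comm]
  push_cast
  rw [add_zero]
  exact congrArg _ (prod_congr rfl fun i _ => by ring)

lemma pochR_pos {a : ℝ} (ha : 0 < a) (k : ℕ) : 0 < pochR a k :=
  prod_pos fun i _ => by positivity

/-- `(a)_k / k!`, the `k`-th Taylor coefficient of `(1 - u) ^ (-a)` at `0`. -/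
noncomputable def binomCoeffR (a : ℝ) (k : ℕ) : ℝ := pochR a k / k.factorial

noncomputable def binomPartialSum (a : ℝ) (n : ℕ) (u : ℝ) : ℝ :=
  ∑ k ∈ range (n + 1), binomCoeffR a k * u ^ k

lemma binomCoeffR_succ (a : ℝ) (k : ℕ) :
    binomCoeffR a (k + 1) * (k + 1) = (a + k) * binomCoeffR a k := by
  simp only [binomCoeffR, pochR_succ, Nat.factorial_succ]
  push_cast
  field_simp

lemma binomPartialSum_zero_right (a : ℝ) (n : ℕ) : binomPartialSum a n 0 = 1 := by
  rw [binomPartialSum, sum_eq_single 0 (fun k _ hk => by simp [hk]) (by simp)]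
  simp [binomCoeffR, pochR]

/-- The truncation of the equation `(1 - u) f' = a f` satisfied by `f u = (1 - u) ^ (-a)`. -/
lemma hasDerivAt_binomPartialSum (a : ℝ) (n : ℕ) {u : ℝ} (hu : u ≠ 1) :
    HasDerivAt (binomPartialSum a n)
      ((a * binomPartialSum a n u - (a + n) * binomCoeffR a n * u ^ n) / (1 - u)) u := by
  have hu' : 1 - u ≠ 0 := sub_ne_zero.mpr hu.symm
  induction n with
  | zero =>
    have h0 : binomPartialSum a 0 = fun _ => 1 := by
      funext v; simp [binomPartialSum, binomCoeffR, pochR]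
    rw [h0]
    simpa [binomCoeffR, pochR, binomPartialSum] using hasDerivAt_const u (1 : ℝ)
  | succ n ih =>
    have hsum : binomPartialSum a (n + 1) =
        fun v => binomPartialSum a n v + binomCoeffR a (n + 1) * v ^ (n + 1) := by
      funext v; exact sum_range_succ _ _
    rw [hsum]
    refine (ih.add ((hasDerivAt_pow (n + 1) u).const_mul _)).congr_deriv ?_
    field_simp
    push_cast
    linear_combination u ^ n * binomCoeffR_succ a n

lemma hasDerivAt_one_sub_rpow_mul_binomPartialSum (a : ℝ) (n : ℕ) {x : ℝ} (hx : x < 1) :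
    HasDerivAt (fun y => (1 - y) ^ (-a) * binomPartialSum a n (y / (y - 1)))
      ((a + n) * binomCoeffR a n * (-1) ^ n * (x ^ n * (1 - x) ^ (-a - n - 1))) x := by
  have h1x : 1 - x ≠ 0 := by linarith
  have hx1 : x - 1 ≠ 0 := by linarith
  have hu : x / (x - 1) ≠ 1 := fun h => by field_simp at h; linarith
  have hpow : HasDerivAt (fun y => (1 - y) ^ (-a)) (-1 * -a * (1 - x) ^ (-a - 1)) x :=
    ((hasDerivAt_id x).const_sub 1).rpow_const (Or.inl h1x)
  have hquot : HasDerivAt (fun y => y / (y - 1)) (-1 / (x - 1) ^ 2) x :=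
    ((hasDerivAt_id x).div ((hasDerivAt_id x).sub_const 1) hx1).congr_deriv (by simp)
  refine (hpow.mul ((hasDerivAt_binomPartialSum a n hu).comp x hquot)).congr_deriv ?_
  have hsplit : ∀ m : ℕ, (1 - x) ^ (-a - n - 1 + m) = (1 - x) ^ (-a - n - 1) * (1 - x) ^ m :=
    Real.rpow_add_natCast h1x _
  have h0 := hsplit (n + 1)
  have h1 := hsplit n
  push_cast at h0 h1
  rw [show -a - n - 1 + (n + 1) = -a by ring] at h0
  rw [show -a - n - 1 + n = -a - 1 by ring] at h1
  rw [Function.comp_apply, h0, h1, show x / (x - 1) = -(x / (1 - x)) by field_simp; ring,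
    neg_pow, div_pow]
  field_simp
  ring

theorem integral_pow_mul_one_sub_rpow (a : ℝ) (n : ℕ) {t : ℝ} (ht : t < 1) :
    (a + n) * binomCoeffR a n * (-1) ^ n * ∫ x in (0 : ℝ)..t, x ^ n * (1 - x) ^ (-a - n - 1) =
      (1 - t) ^ (-a) * binomPartialSum a n (t / (t - 1)) - 1 := by
  have hlt : ∀ x ∈ Set.uIcc 0 t, x < 1 := fun x hx =>
    (Set.mem_uIcc.mp hx).elim (fun h => h.2.trans_lt ht) (fun h => by linarith [h.2])
  have hint :
      IntervalIntegrable (fun x => x ^ n * (1 - x) ^ (-a - n - 1)) MeasureTheory.volume 0 t :=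
    ContinuousOn.intervalIntegrable fun x hx => ((continuous_pow n).continuousAt.mul
      ((continuousAt_const.sub continuousAt_id).rpow_const
        (Or.inl (sub_ne_zero.mpr (hlt x hx).ne')))).continuousWithinAt
  rw [← intervalIntegral.integral_const_mul, intervalIntegral.integral_eq_sub_of_hasDerivAt
    (fun x hx => hasDerivAt_one_sub_rpow_mul_binomPartialSum a n (hlt x hx)) (hint.const_mul _)]
  simp [binomPartialSum_zero_right]

lemma two_mul_half_sub_mul_pochR_neg_half (n : ℕ) :
    2 * (1 / 2 - n) * pochR (-1 / 2) n = pochR (1 / 2) n := by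
  have h := (pochR_succ (-1 / 2) n).symm.trans (pochR_succ' (-1 / 2) n)
  rw [show (-1 / 2 : ℝ) + 1 = 1 / 2 by norm_num] at h
  linear_combination -2 * h

theorem incBeta_reduction_general (n : ℕ) (t : ℝ) (ht1 : t < 1) :
    incBeta (1 + n) (1/2 - n) t =
      2 * (-1) ^ n * (n.factorial : ℝ) / pochR (1/2) n *
        (1 - Real.sqrt (1 - t) *
          ∑ k ∈ Finset.range (n + 1), pochR (-1/2) k / (k.factorial : ℝ) * (t / (t - 1)) ^ k) := by
  have hB : incBeta (1 + n) (1/2 - n) t =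
      ∫ x in (0 : ℝ)..t, x ^ n * (1 - x) ^ (-(-1/2 : ℝ) - n - 1) := by
    refine intervalIntegral.integral_congr fun x _ => ?_
    rw [add_sub_cancel_left, Real.rpow_natCast]
    norm_num
  have hI := integral_pow_mul_one_sub_rpow (-1/2) n ht1
  rw [← hB, show -(-1/2 : ℝ) = 1/2 by norm_num, ← Real.sqrt_eq_rpow] at hI
  have hconst : 2 * (-1) ^ n * (n.factorial : ℝ) / pochR (1/2) n *
      ((-1/2 + n) * binomCoeffR (-1/2) n * (-1) ^ n) = -1 := by
    have hpoch := two_mul_half_sub_mul_pochR_neg_half n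
    have hP := (pochR_pos (by norm_num : (0 : ℝ) < 1/2) n).ne'
    have hsign : ((-1 : ℝ) ^ n) ^ 2 = 1 := by
      rw [← pow_mul, mul_comm, pow_mul, neg_one_sq, one_pow]
    rw [binomCoeffR]
    set c := pochR (-1/2) n
    field_simp
    linear_combination 2 * (n - 1/2) * c * hsign - hpoch
  simp only [binomPartialSum, binomCoeffR] at hI hconst
  linear_combination incBeta (1 + n) (1/2 - n) t * hconst -
    2 * (-1) ^ n * (n.factorial : ℝ) / pochR (1/2) n * hI

theorem incBeta_reduction (n : ℕ) (t : ℝ) (ht0 : 0 < t) (ht1 : t < 1) :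
    incBeta (1 + n) (1/2 - n) t =
      2 * (-1) ^ n * (n.factorial : ℝ) / pochR (1/2) n *
        (1 - Real.sqrt (1 - t) *
          ∑ k ∈ Finset.range (n + 1), pochR (-1/2) k / (k.factorial : ℝ) * (t / (t - 1)) ^ k) :=
  incBeta_reduction_general n t ht1
end

section
/- For nonnegative integers n and real s, x with s + x > 0 and s > 0: ∫_0^∞ e^{-st} t^{-3/2} γ(n+1, xt) dt = -2√π · n! · [√s - √(s+x) · ∑_{k=0}^{n} ((-1/2)_k / k!) (x/(x+s))^k], where γ(ν, z) = ∫_0^z u^{ν-1} e^{-u} du is the lower incomplete gamma function. -/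
/-!
For integer order, `γ(n+1, z) = n! (1 - e^{-z} ∑_{k ≤ n} z^k / k!)`, so the integrand is `n!`
times `t^{-3/2} (e^{-st} - e^{-(s+x)t})` minus the terms `x^k/k! t^{k-3/2} e^{-(s+x)t}`,
`1 ≤ k ≤ n`. These are Gamma integrals, equal to `Γ(k - 1/2) (s+x)^{1/2-k}`, and
`Γ(k - 1/2) = Γ(-1/2) (-1/2)_k = -2√π (-1/2)_k`. The `k = 0` term diverges on its own, so it is
kept as `t^{-3/2} ((1 - e^{-(s+x)t}) - (1 - e^{-st}))`; integrating `t^{-p-1} (1 - e^{-at})` by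
parts against `t^{-p}` gives `a^p Γ(1 - p) / p`, which is `2 √(π a)` at `p = 1/2`.
-/

open scoped BigOperators Real

/-- Lower incomplete gamma function `γ(ν, z) = ∫_0^z u^{ν-1} e^{-u} du`. -/
noncomputable def lowerGamma (ν z : ℝ) : ℝ :=
  ∫ u in (0 : ℝ)..z, u ^ (ν - 1) * Real.exp (-u)

open MeasureTheory Set Real Filter Topology Finset
open scoped Nat

lemma Real.Gamma_add_nat_eq_pochR_mul {a : ℝ} {k : ℕ} (ha : ∀ i < k, a + i ≠ 0) :
    Gamma (a + k) = pochR a k * Gamma a := by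
  induction k with
  | zero => simp [pochR]
  | succ k ih =>
    rw [Nat.cast_succ, ← add_assoc, Gamma_add_one (ha k k.lt_succ_self),
      ih fun i hi => ha i (hi.trans k.lt_succ_self)]
    simp only [pochR, prod_range_succ]
    ring

lemma Real.Gamma_neg_half_add_nat (k : ℕ) :
    Gamma (-1 / 2 + k) = -2 * √π * pochR (-1 / 2) k := by
  have hΓ : Gamma (-1 / 2) = -2 * √π := by
    have := Gamma_add_one (s := -1 / 2) (by norm_num)
    rw [show (-1 / 2 : ℝ) + 1 = 1 / 2 by norm_num, Gamma_one_half_eq] at this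
    linarith
  rw [Gamma_add_nat_eq_pochR_mul fun i _ h => ?_, hΓ]
  · ring
  · have : (2 * i : ℝ) = 1 := by linarith
    exact absurd (by exact_mod_cast this) (by omega : 2 * i ≠ 1)

lemma hasDerivAt_exp_neg_mul_sum_pow_div_factorial (n : ℕ) (z : ℝ) :
    HasDerivAt (fun y => exp (-y) * ∑ k ∈ range (n + 1), y ^ k / k !)
      (-(exp (-z) * (z ^ n / n !))) z := by
  have hexp : HasDerivAt (fun y => exp (-y)) (-exp (-z)) z := by
    simpa using (hasDerivAt_neg z).exp
  induction n with
  | zero => simpa using hexp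
  | succ n ih =>
    simp only [sum_range_succ _ (n + 1), mul_add]
    refine (ih.add (hexp.mul ((hasDerivAt_pow (n + 1) z).div_const ((n + 1)! : ℝ)))).congr_deriv
      ?_
    rw [Nat.factorial_succ, Nat.cast_mul]
    field_simp
    push_cast
    ring

lemma lowerGamma_nat_add_one (n : ℕ) (z : ℝ) :
    lowerGamma (n + 1) z = n ! * (1 - exp (-z) * ∑ k ∈ range (n + 1), z ^ k / k !) := by
  have hpow : ∀ u : ℝ, u ^ ((n + 1 : ℝ) - 1) = u ^ n := fun u => by
    rw [add_sub_cancel_right, rpow_natCast]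
  have hprim : ∀ u : ℝ,
      HasDerivAt (fun y => -(n ! * (exp (-y) * ∑ k ∈ range (n + 1), y ^ k / k !)))
        (u ^ n * exp (-u)) u := fun u => by
    refine ((hasDerivAt_exp_neg_mul_sum_pow_div_factorial n u).const_mul (n ! : ℝ)).neg
      |>.congr_deriv ?_
    field_simp
  have hsum0 : ∑ k ∈ range (n + 1), (0 : ℝ) ^ k / k ! = 1 := by simp [sum_range_succ']
  simp only [lowerGamma, hpow]
  rw [intervalIntegral.integral_eq_sub_of_hasDerivAt (fun u _ => hprim u)
    ((by fun_prop : Continuous fun u : ℝ => u ^ n * exp (-u)).intervalIntegrable _ _),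
    hsum0, neg_zero, exp_zero]
  ring

lemma integrableOn_rpow_mul_exp_neg_mul {a r : ℝ} (ha : 0 < a) (hr : 0 < r) :
    IntegrableOn (fun t : ℝ => t ^ (a - 1) * exp (-(r * t))) (Ioi 0) :=
  .of_integral_ne_zero <| by rw [integral_rpow_mul_exp_neg_mul_Ioi ha hr]; positivity

lemma one_sub_exp_neg_mul_nonneg {a t : ℝ} (ha : 0 ≤ a) (ht : 0 ≤ t) :
    0 ≤ 1 - exp (-(a * t)) :=
  sub_nonneg.2 <| exp_le_one_iff.2 <| neg_nonpos.2 <| mul_nonneg ha ht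

section
variable {p a : ℝ}

lemma integrableOn_rpow_neg_sub_one_mul_one_sub_exp (hp0 : 0 < p) (hp1 : p < 1) (ha : 0 ≤ a) :
    IntegrableOn (fun t : ℝ => t ^ (-p - 1) * (1 - exp (-(a * t)))) (Ioi 0) := by
  have hcont : ContinuousOn (fun t : ℝ => t ^ (-p - 1) * (1 - exp (-(a * t)))) (Ioi 0) :=
    (continuousOn_id.rpow_const fun t ht => Or.inl (ne_of_gt ht)).mul (by fun_prop)
  have hnorm : ∀ t : ℝ, 0 < t →
      ‖t ^ (-p - 1) * (1 - exp (-(a * t)))‖ = t ^ (-p - 1) * (1 - exp (-(a * t))) :=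
    fun t ht => norm_of_nonneg <|
      mul_nonneg (rpow_nonneg ht.le _) (one_sub_exp_neg_mul_nonneg ha ht.le)
  rw [← Ioc_union_Ioi_eq_Ioi zero_le_one]
  refine IntegrableOn.union ?_ ?_
  · refine Integrable.mono' ((intervalIntegral.intervalIntegrable_rpow' (r := -p)
      (by linarith) (a := 0) (b := 1)).1.const_mul a)
      ((hcont.mono Ioc_subset_Ioi_self).aestronglyMeasurable measurableSet_Ioc)
      ((ae_restrict_iff' measurableSet_Ioc).2 (Eventually.of_forall fun t ⟨ht, _⟩ => ?_))
    rw [hnorm t ht]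
    calc t ^ (-p - 1) * (1 - exp (-(a * t))) ≤ t ^ (-p - 1) * (a * t) :=
          mul_le_mul_of_nonneg_left (by linarith [add_one_le_exp (-(a * t))])
            (rpow_nonneg ht.le _)
      _ = a * t ^ (-p) := by rw [rpow_sub_one ht.ne']; field_simp
  · refine Integrable.mono' (integrableOn_Ioi_rpow_of_lt (a := -p - 1) (by linarith) one_pos)
      ((hcont.mono (Ioi_subset_Ioi zero_le_one)).aestronglyMeasurable measurableSet_Ioi)
      ((ae_restrict_iff' measurableSet_Ioi).2 (Eventually.of_forall fun t ht => ?_))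
    have ht0 : (0 : ℝ) < t := one_pos.trans ht
    rw [hnorm t ht0]
    exact mul_le_of_le_one_right (rpow_nonneg ht0.le _) (by linarith [exp_pos (-(a * t))])

lemma integral_rpow_neg_sub_one_mul_one_sub_exp (hp0 : 0 < p) (hp1 : p < 1) (ha : 0 < a) :
    ∫ t in Ioi 0, t ^ (-p - 1) * (1 - exp (-(a * t))) = a ^ p * Gamma (1 - p) / p := by
  set F : ℝ → ℝ := fun t => -(t ^ (-p) * (1 - exp (-(a * t)))) / p with hF
  have hderiv : ∀ t ∈ Ioi (0 : ℝ), HasDerivAt F (t ^ (-p - 1) * (1 - exp (-(a * t)))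
      - a / p * (t ^ ((1 - p) - 1) * exp (-(a * t)))) t := fun t ht => by
    have hexp : HasDerivAt (fun t => 1 - exp (-(a * t))) (exp (-(a * t)) * a) t := by
      simpa using (((hasDerivAt_id t).const_mul a).neg.exp).const_sub 1
    refine (((hasDerivAt_rpow_const (p := -p) (Or.inl (ne_of_gt ht))).mul hexp).neg.div_const
      p).congr_deriv ?_
    rw [show (1 - p) - 1 = -p by ring]
    field_simp
    ring
  have hcont : ContinuousWithinAt F (Ici 0) 0 := by
    have hF0 : F 0 = 0 := by simp [hF]
    rw [← continuousWithinAt_Ioi_iff_Ici, ContinuousWithinAt, hF0]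
    have hlim : Tendsto (fun t : ℝ => a / p * t ^ (1 - p)) (𝓝[>] 0) (𝓝 0) := by
      simpa [zero_rpow (by linarith : 1 - p ≠ 0)] using
        ((continuousAt_rpow_const 0 (1 - p) (Or.inr (by linarith))).tendsto.mono_left
          nhdsWithin_le_nhds).const_mul (a / p)
    refine squeeze_zero_norm' (eventually_nhdsWithin_of_forall fun t (ht : 0 < t) => ?_) hlim
    rw [hF, norm_div, norm_neg, norm_of_nonneg
      (mul_nonneg (rpow_nonneg ht.le _) (one_sub_exp_neg_mul_nonneg ha.le ht.le)),
      norm_of_nonneg hp0.le, div_le_iff₀ hp0]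
    calc t ^ (-p) * (1 - exp (-(a * t))) ≤ t ^ (-p) * (a * t) :=
          mul_le_mul_of_nonneg_left (by linarith [add_one_le_exp (-(a * t))])
            (rpow_nonneg ht.le _)
      _ = a / p * t ^ (1 - p) * p := by
        rw [sub_eq_neg_add, rpow_add_one ht.ne']
        field_simp
  have htop : Tendsto F atTop (𝓝 0) := by
    have h1 : Tendsto (fun t => 1 - exp (-(a * t))) atTop (𝓝 1) := by
      simpa using (tendsto_exp_atBot.comp (tendsto_neg_atTop_atBot.comp
        (tendsto_id.const_mul_atTop ha))).const_sub 1
    simpa using (((tendsto_rpow_neg_atTop hp0).mul h1).neg).div_const p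
  have hI₁ := integrableOn_rpow_neg_sub_one_mul_one_sub_exp hp0 hp1 ha.le
  have hI₂ := (integrableOn_rpow_mul_exp_neg_mul (a := 1 - p) (by linarith) ha).const_mul (a / p)
  have hFTC := integral_Ioi_of_hasDerivAt_of_tendsto hcont hderiv (hI₁.sub hI₂) htop
  rw [integral_sub hI₁ hI₂, integral_const_mul,
    integral_rpow_mul_exp_neg_mul_Ioi (by linarith) ha] at hFTC
  simp only [hF, zero_rpow (neg_ne_zero.2 hp0.ne'), zero_mul, neg_zero, zero_div,
    sub_zero, sub_eq_zero] at hFTC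
  have hpow : a * (1 / a) ^ (1 - p) = a ^ p := by
    rw [one_div, inv_rpow ha.le, ← rpow_neg ha.le, neg_sub, ← rpow_one_add' ha.le (by linarith)]
    ring_nf
  rw [hFTC, ← hpow]
  ring

end

lemma integral_rpow_neg_half_add_nat_mul_exp {b : ℝ} (hb : 0 < b) {k : ℕ} (hk : k ≠ 0) :
    ∫ t in Ioi 0, t ^ ((-1 / 2 + k : ℝ) - 1) * exp (-(b * t)) =
      -2 * √π * pochR (-1 / 2) k * √b / b ^ k := by
  have hk' : (1 : ℝ) ≤ k := by exact_mod_cast Nat.one_le_iff_ne_zero.2 hk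
  rw [integral_rpow_mul_exp_neg_mul_Ioi (by linarith) hb, Gamma_neg_half_add_nat,
    rpow_add (by positivity), rpow_natCast, one_div, inv_rpow hb.le, ← rpow_neg hb.le,
    show -(-1 / 2 : ℝ) = 1 / 2 by norm_num, ← sqrt_eq_rpow, inv_pow]
  ring

lemma exp_mul_rpow_mul_lowerGamma_nat_add_one {t : ℝ} (ht : 0 < t) (n : ℕ) (s x c : ℝ) :
    exp (-s * t) * t ^ c * lowerGamma (n + 1) (x * t) =
      n ! * (t ^ c * (1 - exp (-((s + x) * t))) - t ^ c * (1 - exp (-(s * t)))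
        - ∑ j ∈ range n,
            x ^ (j + 1) / (j + 1)! * (t ^ (c + (j + 1 : ℕ)) * exp (-((s + x) * t)))) := by
  have hexp : exp (-((s + x) * t)) = exp (-(s * t)) * exp (-(x * t)) := by
    rw [← exp_add]; ring_nf
  have hterm : ∀ j ∈ range n, x ^ (j + 1) / (j + 1)! *
      (t ^ (c + (j + 1 : ℕ)) * exp (-((s + x) * t))) =
      (x * t) ^ (j + 1) / (j + 1)! * (t ^ c * exp (-(s * t)) * exp (-(x * t))) := fun j _ => by
    rw [rpow_add ht, rpow_natCast, hexp]
    ring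
  rw [lowerGamma_nat_add_one, sum_range_succ', sum_congr rfl hterm, ← sum_mul]
  simp only [pow_zero, Nat.factorial_zero, Nat.cast_one, div_one, neg_mul, hexp]
  ring

theorem integral_lowerGamma_one (n : ℕ) (s x : ℝ) (hs : 0 < s) (hsx : 0 < s + x) :
    ∫ t in Set.Ioi (0 : ℝ), Real.exp (-s * t) * t ^ (-(3 : ℝ)/2) * lowerGamma (n + 1) (x * t) =
      -2 * Real.sqrt π * (n.factorial : ℝ) *
        (Real.sqrt s - Real.sqrt (s + x) *
          ∑ k ∈ Finset.range (n + 1), pochR (-1/2) k / (k.factorial : ℝ) * (x / (x + s)) ^ k) := by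
  rw [show (-(3 : ℝ) / 2) = -(1 / 2) - 1 by norm_num, setIntegral_congr_fun measurableSet_Ioi
    fun t ht => exp_mul_rpow_mul_lowerGamma_nat_add_one ht n s x _]
  simp_rw [show ∀ k : ℕ, -(1 / 2 : ℝ) - 1 + k = (-1 / 2 + k) - 1 from fun k => by ring]
  have hIreg {a : ℝ} (ha : 0 < a) := integrableOn_rpow_neg_sub_one_mul_one_sub_exp
    (p := 1 / 2) (a := a) (by norm_num) (by norm_num) ha.le
  have hIsum : ∀ j ∈ range n, IntegrableOn (fun t => x ^ (j + 1) / (j + 1)! *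
      (t ^ ((-1 / 2 + (j + 1 : ℕ) : ℝ) - 1) * exp (-((s + x) * t)))) (Ioi 0) := fun j _ =>
    (integrableOn_rpow_mul_exp_neg_mul (by push_cast; linarith) hsx).const_mul _
  have hGamma : ∀ j ∈ range n, ∫ t in Ioi 0, x ^ (j + 1) / (j + 1)! *
      (t ^ ((-1 / 2 + (j + 1 : ℕ) : ℝ) - 1) * exp (-((s + x) * t))) =
      -2 * √π * √(s + x) * (pochR (-1 / 2) (j + 1) / (j + 1)! * (x / (x + s)) ^ (j + 1)) :=
    fun j _ => by
      rw [integral_const_mul, integral_rpow_neg_half_add_nat_mul_exp hsx (k := j + 1) (by omega),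
        div_pow, add_comm x s]
      ring
  rw [integral_const_mul,
    integral_sub ((hIreg hsx).sub' (hIreg hs)) (integrable_finsetSum _ hIsum),
    integral_sub (hIreg hsx) (hIreg hs), integral_finsetSum _ hIsum,
    integral_rpow_neg_sub_one_mul_one_sub_exp (by norm_num) (by norm_num) hsx,
    integral_rpow_neg_sub_one_mul_one_sub_exp (by norm_num) (by norm_num) hs,
    sum_congr rfl hGamma, ← mul_sum, sum_range_succ' _ n, show pochR (-1 / 2) 0 = 1 from
    prod_range_zero _, show (1 : ℝ) - 1 / 2 = 1 / 2 by norm_num, Gamma_one_half_eq,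
    ← sqrt_eq_rpow, ← sqrt_eq_rpow, Nat.factorial_zero, Nat.cast_one, pow_zero]
  ring
end

section
/- Whipple's sum evaluation: ₃F₂(1/4, 1/2, 3/4; 2/3, 4/3; 1) = 4/3, i.e. ∑_{k≥0} ((1/4)_k (1/2)_k (3/4)_k / ((2/3)_k (4/3)_k)) / k! = 4/3. -/
/-!
By Gauss's multiplication formula the `k`-th term is `A k * (27/256)^k`, where
`A k = (4k)! / (k! (3k+1)!)` is a quartic Fuss–Catalan number. The Fuss–Catalan numbers
`A p r n = r/(pn+r) * C(pn+r, n)` are the coefficients of `B^r` for the power series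
`B = 1 + x B^p`; on coefficients this is the recursion
`A p (r+1) (n+1) = A p r (n+1) + A p (r+p) n`, which yields the convolution identity
`A p r ⋆ A p s = A p (r+s)`. Hence the sum `S` satisfies
`S = 1 + (27/256) S^4` once the series converges absolutely, i.e. `(3S-4)^2 (3S^2+8S+16) = 0`, so
`S = 4/3`. Convergence at `x = 27/256`, the radius of convergence, comes from the decay
`O(k^(-3/2))` of the terms, read off from their ratio.
-/

open scoped BigOperators

open Finset

-- The case `n = 0` is split off because the closed formula reads `0/0` at `r = n = 0`.
noncomputable def fussCatalan (p r n : ℕ) : ℝ :=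
  if n = 0 then 1 else r / (p * n + r) * (p * n + r).choose n

lemma fussCatalan_zero_right (p r : ℕ) : fussCatalan p r 0 = 1 := if_pos rfl

lemma fussCatalan_zero_left (p n : ℕ) : fussCatalan p 0 n = if n = 0 then 1 else 0 := by
  unfold fussCatalan
  split_ifs <;> simp

lemma mul_fussCatalan_eq_mul_choose (p r n : ℕ) :
    ((p * n + r : ℕ) : ℝ) * fussCatalan p r n = r * (p * n + r).choose n := by
  unfold fussCatalan
  split_ifs with hn
  · simp [hn]
  · rcases Nat.eq_zero_or_pos (p * n + r) with h | h
    · simp [show r = 0 by omega]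
    · have : ((p * n + r : ℕ) : ℝ) ≠ 0 := by positivity
      push_cast at this ⊢
      field_simp

lemma fussCatalan_succ_succ (p r n : ℕ) :
    fussCatalan p (r + 1) (n + 1) = fussCatalan p r (n + 1) + fussCatalan p (r + p) n := by
  obtain ⟨m, hm⟩ : ∃ m, p * (n + 1) + r = m := ⟨_, rfl⟩
  rcases Nat.eq_zero_or_pos m with rfl | hm0
  · obtain ⟨rfl, rfl⟩ : p = 0 ∧ r = 0 := by constructor <;> nlinarith
    cases n <;> simp [fussCatalan, Nat.choose_eq_zero_of_lt]
  have h₁ := mul_fussCatalan_eq_mul_choose p (r + 1) (n + 1)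
  have h₂ := mul_fussCatalan_eq_mul_choose p r (n + 1)
  have h₃ := mul_fussCatalan_eq_mul_choose p (r + p) n
  rw [show p * (n + 1) + (r + 1) = m + 1 by omega] at h₁
  rw [hm] at h₂
  rw [show p * n + (r + p) = m by rw [← hm]; ring] at h₃
  have hpascal : ((m + 1).choose (n + 1) : ℝ) = m.choose n + m.choose (n + 1) := by
    exact_mod_cast Nat.choose_succ_succ m n
  have habsorb : ((m + 1 : ℕ) : ℝ) * m.choose n = (m + 1).choose (n + 1) * (n + 1) := by
    exact_mod_cast Nat.add_one_mul_choose_eq m n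
  have hmR : (m : ℝ) = p * (n + 1) + r := by rw [← hm]; push_cast; ring
  have hm' : (m : ℝ) ≠ 0 := by positivity
  have hm'' : (m : ℝ) + 1 ≠ 0 := by positivity
  have hn : (n : ℝ) + 1 ≠ 0 := by positivity
  apply mul_left_cancel₀ (mul_ne_zero (mul_ne_zero hm' hm'') hn)
  push_cast at *
  linear_combination m * (n + 1) * h₁ - (m + 1) * (n + 1) * h₂ - (m + 1) * (n + 1) * h₃
    + (r - m) * habsorb + (m + 1) * (n + 1) * r * hpascal + (m + 1) * (m.choose n) * hmR

lemma sum_antidiagonal_fussCatalan_mul (p n r s : ℕ) :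
    ∑ ij ∈ antidiagonal n, fussCatalan p r ij.1 * fussCatalan p s ij.2 =
      fussCatalan p (r + s) n := by
  induction n generalizing r s with
  | zero => simp [fussCatalan_zero_right]
  | succ n ih =>
    induction s with
    | zero => simp [Nat.sum_antidiagonal_succ', fussCatalan_zero_left]
    | succ s ihs =>
      rw [Nat.sum_antidiagonal_succ'] at ihs ⊢
      simp only [fussCatalan_succ_succ p s, mul_add, sum_add_distrib, ih, fussCatalan_zero_right,
        ← add_assoc, ← Nat.add_assoc r s 1, fussCatalan_succ_succ p (r + s)] at ihs ⊢
      linarith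

lemma sum_antidiagonal_fussCatalan_mul_pow (p r s n : ℕ) (x : ℝ) :
    ∑ ij ∈ antidiagonal n, fussCatalan p r ij.1 * x ^ ij.1 * (fussCatalan p s ij.2 * x ^ ij.2) =
      fussCatalan p (r + s) n * x ^ n := by
  rw [← sum_antidiagonal_fussCatalan_mul, sum_mul]
  refine sum_congr rfl fun ij hij => ?_
  rw [← mem_antidiagonal.1 hij, pow_add]
  ring

lemma fussCatalan_zero_left_mul_pow (p n : ℕ) (x : ℝ) :
    fussCatalan p 0 n * x ^ n = if n = 0 then 1 else 0 := by
  rw [fussCatalan_zero_left]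
  split_ifs with hn <;> simp [hn]

lemma summable_norm_fussCatalan_mul_pow_and_tsum_eq (p : ℕ) {x : ℝ}
    (h : Summable fun n => ‖fussCatalan p 1 n * x ^ n‖) (r : ℕ) :
    (Summable fun n => ‖fussCatalan p r n * x ^ n‖) ∧
      ∑' n, fussCatalan p r n * x ^ n = (∑' n, fussCatalan p 1 n * x ^ n) ^ r := by
  induction r with
  | zero =>
    simp only [fussCatalan_zero_left_mul_pow, pow_zero]
    exact ⟨summable_of_ne_finset_zero (s := {0}) (by simp_all), tsum_ite_eq 0 1⟩
  | succ r ih =>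
    obtain ⟨hr, hrsum⟩ := ih
    refine ⟨(summable_norm_sum_mul_antidiagonal_of_summable_norm hr h).congr fun n => by
      rw [sum_antidiagonal_fussCatalan_mul_pow], ?_⟩
    rw [pow_succ, ← hrsum, tsum_mul_tsum_eq_tsum_sum_antidiagonal_of_summable_norm hr h]
    exact tsum_congr fun n => (sum_antidiagonal_fussCatalan_mul_pow p r 1 n x).symm

theorem fussCatalan_tsum_eq_one_add (p : ℕ) {x : ℝ}
    (h : Summable fun n => ‖fussCatalan p 1 n * x ^ n‖) :
    ∑' n, fussCatalan p 1 n * x ^ n = 1 + x * (∑' n, fussCatalan p 1 n * x ^ n) ^ p := by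
  have hshift (n : ℕ) :
      fussCatalan p 1 (n + 1) * x ^ (n + 1) = x * (fussCatalan p p n * x ^ n) := by
    have hrec := fussCatalan_succ_succ p 0 n
    rw [zero_add, zero_add, fussCatalan_zero_left, if_neg n.succ_ne_zero, zero_add] at hrec
    rw [hrec, pow_succ]
    ring
  conv_lhs => rw [h.of_norm.tsum_eq_zero_add, fussCatalan_zero_right, pow_zero, mul_one]
  simp only [hshift, tsum_mul_left, (summable_norm_fussCatalan_mul_pow_and_tsum_eq p h p).2]

lemma factorial_four_mul_eq_pochR (k : ℕ) :
    ((4 * k).factorial : ℝ) =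
      256 ^ k * k.factorial * pochR (1/4) k * pochR (1/2) k * pochR (3/4) k := by
  induction k with
  | zero => simp [pochR]
  | succ k ih =>
    rw [show 4 * (k + 1) = 4 * k + 3 + 1 by ring]
    simp only [Nat.factorial_succ, pochR_succ, Nat.cast_mul, Nat.cast_add, Nat.cast_ofNat,
      Nat.cast_one, pow_succ] at ih ⊢
    rw [ih]
    ring

lemma factorial_three_mul_add_one_eq_pochR (k : ℕ) :
    ((3 * k + 1).factorial : ℝ) = 27 ^ k * k.factorial * pochR (2/3) k * pochR (4/3) k := by
  induction k with
  | zero => simp [pochR]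
  | succ k ih =>
    rw [show 3 * (k + 1) + 1 = 3 * k + 1 + 1 + 1 + 1 by ring]
    simp only [Nat.factorial_succ, pochR_succ, Nat.cast_mul, Nat.cast_add, Nat.cast_ofNat,
      Nat.cast_one, pow_succ] at ih ⊢
    rw [ih]
    ring

lemma fussCatalan_four_one (k : ℕ) :
    fussCatalan 4 1 k = ((4 * k).factorial : ℝ) / (k.factorial * (3 * k + 1).factorial) := by
  rcases eq_or_ne k 0 with rfl | hk
  · simp [fussCatalan]
  rw [fussCatalan, if_neg hk, Nat.cast_choose ℝ (by omega),
    show 4 * k + 1 - k = 3 * k + 1 by omega, Nat.factorial_succ]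
  push_cast
  field_simp

noncomputable def whippleTerm (k : ℕ) : ℝ :=
  pochR (1/4) k * pochR (1/2) k * pochR (3/4) k /
    (pochR (2/3) k * pochR (4/3) k * (k.factorial : ℝ))

lemma whippleTerm_eq_fussCatalan (k : ℕ) :
    whippleTerm k = fussCatalan 4 1 k * (27 / 256) ^ k := by
  have := pochR_pos (show (0:ℝ) < 2/3 by norm_num) k
  have := pochR_pos (show (0:ℝ) < 4/3 by norm_num) k
  rw [whippleTerm, fussCatalan_four_one, factorial_four_mul_eq_pochR,
    factorial_three_mul_add_one_eq_pochR, div_pow]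
  field_simp

lemma whippleTerm_succ (k : ℕ) :
    whippleTerm (k + 1) = whippleTerm k *
      ((1/4 + k) * (1/2 + k) * (3/4 + k) / ((2/3 + k) * (4/3 + k) * (k + 1))) := by
  have := pochR_pos (show (0:ℝ) < 2/3 by norm_num) k
  have := pochR_pos (show (0:ℝ) < 4/3 by norm_num) k
  simp only [whippleTerm, pochR_succ, Nat.factorial_succ]
  push_cast
  field_simp

lemma whippleTerm_pos (k : ℕ) : 0 < whippleTerm k := by
  induction k with
  | zero => simp [whippleTerm, pochR]
  | succ k ih => rw [whippleTerm_succ]; positivity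

lemma whippleTerm_sq_mul_le_one (k : ℕ) : whippleTerm k ^ 2 * (k + 1) ^ 3 ≤ 1 := by
  induction k with
  | zero => simp [whippleTerm, pochR]
  | succ k ih =>
    have hratio : ((1/4 + k) * (1/2 + k) * (3/4 + k) / ((2/3 + k) * (4/3 + k) * (k + 1))) ^ 2 *
        ((k : ℝ) + 2) ^ 3 ≤ (k + 1) ^ 3 := by
      rw [div_pow, div_mul_eq_mul_div, div_le_iff₀ (by positivity)]
      have hk : (0 : ℝ) ≤ k := k.cast_nonneg
      -- the difference of the two sides is a polynomial in `k` with nonnegative coefficients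
      nlinarith [pow_nonneg hk 2, pow_nonneg hk 3, pow_nonneg hk 4, pow_nonneg hk 5,
        pow_nonneg hk 6, pow_nonneg hk 7]
    rw [whippleTerm_succ, mul_pow, Nat.cast_succ, add_assoc, one_add_one_eq_two]
    calc _ ≤ whippleTerm k ^ 2 * (k + 1) ^ 3 := by
          rw [mul_assoc]; exact mul_le_mul_of_nonneg_left hratio (sq_nonneg _)
      _ ≤ 1 := ih

lemma summable_whippleTerm : Summable whippleTerm := by
  have hp : Summable fun k : ℕ => (((k + 1 : ℕ) : ℝ) ^ (3/2 : ℝ))⁻¹ :=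
    (summable_nat_add_iff 1).2 (Real.summable_nat_rpow_inv.2 (by norm_num))
  refine hp.of_nonneg_of_le (fun k => (whippleTerm_pos k).le) fun k => ?_
  have hsq : ((((k + 1 : ℕ) : ℝ) ^ (3/2 : ℝ))) ^ 2 = ((k : ℝ) + 1) ^ 3 := by
    rw [← Real.rpow_natCast, ← Real.rpow_mul (by positivity)]
    norm_num
  rw [← one_div, le_div_iff₀ (by positivity)]
  refine (pow_le_one_iff_of_nonneg (mul_nonneg (whippleTerm_pos k).le (by positivity))
    two_ne_zero).1 ?_
  rw [mul_pow, hsq]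
  exact whippleTerm_sq_mul_le_one k

theorem whipple_sum_eval :
    Summable (fun k : ℕ =>
      pochR (1/4) k * pochR (1/2) k * pochR (3/4) k /
        (pochR (2/3) k * pochR (4/3) k * (k.factorial : ℝ))) ∧
    ∑' k : ℕ, pochR (1/4) k * pochR (1/2) k * pochR (3/4) k /
        (pochR (2/3) k * pochR (4/3) k * (k.factorial : ℝ)) = 4/3 := by
  refine ⟨summable_whippleTerm, ?_⟩
  have hterm : whippleTerm = fun k => fussCatalan 4 1 k * (27 / 256) ^ k :=
    funext whippleTerm_eq_fussCatalan
  have hnorm : Summable fun k => ‖fussCatalan 4 1 k * (27 / 256 : ℝ) ^ k‖ :=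
    summable_whippleTerm.norm.congr fun k => by rw [whippleTerm_eq_fussCatalan]
  have hS := fussCatalan_tsum_eq_one_add 4 hnorm
  change ∑' k, whippleTerm k = 4 / 3
  rw [hterm]
  set S := ∑' k, fussCatalan 4 1 k * (27 / 256 : ℝ) ^ k
  have hroots : (3 * S - 4) ^ 2 * (3 * S ^ 2 + 8 * S + 16) = 0 := by
    linear_combination (-256) * hS
  have hpos : 0 < 3 * S ^ 2 + 8 * S + 16 := by nlinarith [sq_nonneg (3 * S + 4)]
  have hS43 : 3 * S - 4 = 0 :=
    pow_eq_zero_iff two_ne_zero |>.1 ((mul_eq_zero.1 hroots).resolve_right hpos.ne')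
  linarith
end
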